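/- Colouring lemma: Let n ≥ 1 and θ ≥ 2 be integers, let f : S_n → ℝ be a probability distribution on the symmetric group S_n that is a class function (f(σ) depends only on the cycle type of σ), and let p_1, …, p_θ ≥ 0 with ∑_{i=1}^θ p_i = 1. Then ∑_{σ ∈ S_n} f(σ)·∏_γ (∑_{i=1}^θ p_i^{|γ|}) = ∑_{λ ⊢_θ n} C(n;λ)·(∑_{κ ∈ K(λ)} ∏_{i=1}^θ p_i^{κ_i})·∑_{σ ∈ T_λ} f(σ), where the product over γ runs over the cycles of σ (orbits on {1,…,n}, including fixed points) and |γ| is the length of γ. -/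

import Mathlib

/-- The multiset of cycle lengths of `σ`, including singletons (fixed points). -/
def cycleMultiset (n : ℕ) (σ : Equiv.Perm (Fin n)) : Multiset ℕ :=
  σ.cycleType + Multiset.replicate (n - σ.support.card) 1

/-- The finset of partitions of `n` into at most `θ` parts, viewed as
weakly decreasing vectors `λ : Fin θ → ℕ` with `∑ λ_i = n`. -/
def partitionsTh (θ n : ℕ) : Finset (Fin θ → ℕ) :=
  (Fintype.piFinset fun _ : Fin θ => Finset.range (n + 1)).filter
    (fun lam => (∀ i j : Fin θ, i ≤ j → lam j ≤ lam i) ∧ ∑ i, lam i = n)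

-- `K(λ)`: the finset of vectors obtained by permuting the entries of `λ`.
open scoped Classical in
noncomputable def rearrangements (θ n : ℕ) (lam : Fin θ → ℕ) : Finset (Fin θ → ℕ) :=
  (Fintype.piFinset fun _ : Fin θ => Finset.range (n + 1)).filter
    (fun κ => ∃ π : Equiv.Perm (Fin θ), κ = lam ∘ π)

/-- The index of the consecutive block (of sizes `λ_1, λ_2, …`) containing position `v`. -/
def blockOf (θ : ℕ) (lam : Fin θ → ℕ) (v : ℕ) : ℕ :=
  (Finset.univ.filter (fun i : Fin θ =>
    (∑ j ∈ Finset.univ.filter (fun j : Fin θ => j ≤ i), lam j) ≤ v)).card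

/-- The Young subgroup `T_λ` of `S_n`, as a finset: permutations preserving each of the
consecutive blocks `{1,…,λ_1}, {λ_1+1,…,λ_1+λ_2}, …` of sizes `λ_1,…,λ_θ`. -/
def youngFinset (n θ : ℕ) (lam : Fin θ → ℕ) : Finset (Equiv.Perm (Fin n)) :=
  Finset.univ.filter (fun σ => ∀ v : Fin n, blockOf θ lam ((σ v : ℕ)) = blockOf θ lam (v : ℕ))

/-!
Expanding each factor `∑ i, p i ^ |γ|` turns the left side into a sum over pairs `(σ, g)` of a
permutation and a colouring `g : Fin n → Fin θ` constant on the cycles of `σ`, with weight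
`f σ * ∏ v, p (g v)`. Summing over `σ` first, a colouring `g` with fibre sizes `κ` contributes
`(∑ σ ∈ Stab g, f σ) * ∏ i, p i ^ κ i`. Colourings with the same `κ` differ by a permutation of
`Fin n`, which conjugates their stabilizers; as `f` is a class function, the stabilizer sum is the
sum over the Young subgroup of the decreasing rearrangement `λ` of `κ`, and the number of such
colourings is the multinomial coefficient `C(n; κ) = C(n; λ)`. Grouping the vectors `κ` by `λ`
gives the right side.
-/

open Finset Equiv Function

namespace Equiv.Perm

variable {α β : Type*}

theorem comp_zpow_eq_of_comp_eq {g : β → α} {σ : Perm β} (h : g ∘ σ = g) (k : ℤ) :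
    g ∘ ⇑(σ ^ k) = g := by
  have hσ : DomMulAct.mk σ ∈ MulAction.stabilizer (Perm β)ᵈᵐᵃ g :=
    DomMulAct.mem_stabilizer_iff.mpr h
  simpa using DomMulAct.mem_stabilizer_iff.mp (zpow_mem hσ k)

theorem sameCycle_le_ker_iff {g : β → α} {σ : Perm β} :
    SameCycle.setoid σ ≤ Setoid.ker g ↔ g ∘ σ = g := by
  constructor
  · intro h
    funext v
    exact (h (sameCycle_apply_right.mpr (SameCycle.refl σ v))).symm
  · rintro h v w ⟨k, rfl⟩
    exact (congrFun (comp_zpow_eq_of_comp_eq h k) v).symm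

variable [Fintype β] [DecidableEq β]

-- Instance search does not unfold the setoid relation to `SameCycle`.
instance (σ : Perm β) : DecidableRel (SameCycle.setoid σ).r :=
  inferInstanceAs (DecidableRel σ.SameCycle)

theorem filter_sameCycle_eq_support_cycleOf {σ : Perm β} {v : β} (hv : v ∈ σ.support) :
    ({w | σ.SameCycle w v} : Finset β) = (σ.cycleOf v).support := by
  ext w
  rw [mem_filter_univ, mem_support_cycleOf_iff, sameCycle_comm]
  exact (and_iff_left hv).symm

theorem filter_sameCycle_eq_singleton {σ : Perm β} {v : β} (hv : v ∉ σ.support) :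
    ({w | σ.SameCycle w v} : Finset β) = {v} := by
  ext w
  rw [mem_filter_univ, mem_singleton]
  exact ⟨fun h => h.eq_of_right (notMem_support.mp hv), fun h => h ▸ SameCycle.refl σ v⟩

theorem filter_mk_eq_filter_sameCycle_out (σ : Perm β) (q : Quotient (SameCycle.setoid σ)) :
    univ.filter (fun v => Quotient.mk _ v = q) = univ.filter (σ.SameCycle · q.out) := by
  ext w
  rw [mem_filter_univ, mem_filter_univ]
  exact Quotient.mk_eq_iff_out

variable {M : Type*} [CommMonoid M]

theorem prod_filter_out_mem_support_eq_prod_cycleFactorsFinset (σ : Perm β) (φ : ℕ → M) :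
    ∏ q : Quotient (SameCycle.setoid σ) with q.out ∈ σ.support, φ #{v | Quotient.mk _ v = q}
      = ∏ c ∈ σ.cycleFactorsFinset, φ #c.support := by
  refine prod_nbij (fun q => σ.cycleOf q.out) ?_ ?_ ?_ ?_
  · intro q hq
    exact cycleOf_mem_cycleFactorsFinset_iff.mpr ((mem_filter_univ q).mp hq)
  · intro q₁ hq₁ q₂ hq₂ h
    rw [mem_coe, mem_filter_univ] at hq₁ hq₂
    exact Quotient.out_equiv_out.mp ((sameCycle_iff_cycleOf_eq_of_mem_support hq₁ hq₂).mpr h)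
  · intro c hc
    obtain ⟨a, ha⟩ := (mem_cycleFactorsFinset_iff.mp hc).1.nonempty_support
    have haσ : a ∈ σ.support := mem_cycleFactorsFinset_support_le hc ha
    have hout : σ.SameCycle a (Quotient.mk (SameCycle.setoid σ) a).out :=
      (Quotient.mk_out (s := SameCycle.setoid σ) a).symm
    refine ⟨Quotient.mk _ a, ?_, ?_⟩
    · rw [mem_coe, mem_filter_univ]
      exact hout.mem_support_iff.mp haσ
    · show σ.cycleOf _ = c
      rw [← hout.cycleOf_eq, ← cycle_is_cycleOf ha hc]
  · intro q hq
    rw [mem_filter_univ] at hq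
    rw [filter_mk_eq_filter_sameCycle_out, filter_sameCycle_eq_support_cycleOf hq]

theorem prod_filter_out_notMem_support_eq_pow (σ : Perm β) (φ : ℕ → M) :
    ∏ q : Quotient (SameCycle.setoid σ) with q.out ∉ σ.support, φ #{v | Quotient.mk _ v = q}
      = φ 1 ^ (Fintype.card β - #σ.support) := by
  have hfix : ∀ q ∈ univ.filter (fun q : Quotient (SameCycle.setoid σ) => q.out ∉ σ.support),
      φ #{v | Quotient.mk _ v = q} = φ 1 := by
    intro q hq
    rw [mem_filter_univ] at hq
    rw [filter_mk_eq_filter_sameCycle_out, filter_sameCycle_eq_singleton hq, card_singleton]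
  have hout : ∀ v ∉ σ.support, (Quotient.mk (SameCycle.setoid σ) v).out = v := fun v hv =>
    (Quotient.mk_out (s := SameCycle.setoid σ) v).eq_of_right (notMem_support.mp hv)
  rw [prod_congr rfl hfix, prod_const, ← card_compl]
  congr 1
  refine card_nbij' (·.out) (Quotient.mk _) ?_ ?_ (fun q _ => Quotient.out_eq q) ?_
  · intro q hq
    rw [mem_coe, mem_filter_univ] at hq
    rwa [mem_coe, mem_compl]
  · intro v hv
    rw [mem_coe, mem_compl] at hv
    rw [mem_coe, mem_filter_univ, hout v hv]
    exact hv
  · intro v hv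
    rw [mem_coe, mem_compl] at hv
    exact hout v hv

theorem prod_card_fiber_quotient_sameCycle (σ : Perm β) (φ : ℕ → M) :
    ∏ q : Quotient (SameCycle.setoid σ), φ #{v | Quotient.mk _ v = q}
      = (σ.partition.parts.map φ).prod := by
  rw [parts_partition, Multiset.map_add, Multiset.prod_add, Multiset.map_replicate,
    Multiset.prod_replicate, cycleType_def, Multiset.map_map, Finset.prod_map_val,
    ← prod_filter_mul_prod_filter_not univ (fun q => q.out ∈ σ.support),
    prod_filter_out_mem_support_eq_prod_cycleFactorsFinset,
    prod_filter_out_notMem_support_eq_pow]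
  rfl

variable [Fintype α] {R : Type*} [CommSemiring R]

theorem sum_prod_comp_quotient_mk (σ : Perm β) (p : α → R) :
    ∑ c : Quotient (SameCycle.setoid σ) → α, ∏ v, p (c (Quotient.mk _ v))
      = ∏ q : Quotient (SameCycle.setoid σ), ∑ a, p a ^ #{v | Quotient.mk _ v = q} := by
  rw [Fintype.prod_sum]
  refine sum_congr rfl fun c _ => ?_
  rw [← prod_fiberwise' univ (Quotient.mk _) fun q => p (c q)]
  simp only [prod_const]

variable [DecidableEq α]

theorem sum_comp_eq_self_eq_sum_quotient (σ : Perm β) (w : (β → α) → R) :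
    ∑ g ∈ {g : β → α | g ∘ σ = g}, w g
      = ∑ c : Quotient (SameCycle.setoid σ) → α, w (c ∘ Quotient.mk _) := by
  rw [Finset.sum_subtype _ (p := fun g : β → α => g ∘ σ = g) mem_filter_univ]
  exact Fintype.sum_equiv ((subtypeEquivRight fun (g : β → α) => sameCycle_le_ker_iff.symm).trans
    (Setoid.liftEquiv (SameCycle.setoid σ))) (fun g => w g.1)
    (fun c => w (c ∘ Quotient.mk _)) fun _ => rfl

theorem prod_map_parts_partition_eq_sum (σ : Perm β) (p : α → R) :
    (σ.partition.parts.map fun l => ∑ a, p a ^ l).prod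
      = ∑ g ∈ {g : β → α | g ∘ σ = g}, ∏ v, p (g v) := by
  rw [sum_comp_eq_self_eq_sum_quotient, ← prod_card_fiber_quotient_sameCycle]
  exact (sum_prod_comp_quotient_mk σ p).symm

end Equiv.Perm

section Colourings

variable {α β M : Type*} [DecidableEq α] [Fintype β]

def fiberCard (g : β → α) (a : α) : ℕ := #{v | g v = a}

theorem fiberCard_comp_perm (g : β → α) (τ : Perm β) : fiberCard (g ∘ τ) = fiberCard g := by
  funext a
  exact card_equiv τ fun v => by simp

theorem fiberCard_equiv_comp {α' : Type*} [DecidableEq α'] (e : α ≃ α') (g : β → α) :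
    fiberCard (e ∘ g) = fiberCard g ∘ e.symm := by
  funext a
  simp [fiberCard, ← e.eq_symm_apply]

theorem exists_perm_comp_eq_of_fiberCard_eq {g g' : β → α} (h : fiberCard g = fiberCard g') :
    ∃ τ : Perm β, g ∘ τ = g' := by
  have hcard : ∀ a, Fintype.card {v // g' v = a} = Fintype.card {v // g v = a} := fun a => by
    simp only [Fintype.card_subtype]
    exact (congrFun h a).symm
  exact ⟨ofFiberEquiv fun a => Fintype.equivOfCardEq (hcard a), funext (ofFiberEquiv_map _)⟩

theorem sum_fiberCard [Fintype α] (g : β → α) : ∑ a, fiberCard g a = Fintype.card β :=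
  (card_eq_sum_card_fiberwise fun v _ => mem_univ (g v)).symm

theorem prod_comp_eq_prod_pow_fiberCard [Fintype α] [CommMonoid M] (p : α → M) (g : β → α) :
    ∏ v, p (g v) = ∏ a, p a ^ fiberCard g a := by
  rw [← prod_fiberwise' univ g p]
  simp only [prod_const, fiberCard]

variable [DecidableEq β]

def stabilizerFinset (g : β → α) : Finset (Perm β) := {σ | g ∘ σ = g}

theorem mem_stabilizerFinset {g : β → α} {σ : Perm β} : σ ∈ stabilizerFinset g ↔ g ∘ σ = g :=
  mem_filter_univ σ

theorem stabilizerFinset_injective_comp {α' : Type*} [DecidableEq α'] {e : α → α'}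
    (he : Injective e) (g : β → α) : stabilizerFinset (e ∘ g) = stabilizerFinset g := by
  ext σ
  rw [mem_stabilizerFinset, mem_stabilizerFinset, comp_assoc]
  exact he.comp_left.eq_iff

theorem sum_stabilizerFinset_comp_perm [AddCommMonoid M] {f : Perm β → M}
    (hf : ∀ σ τ, f (τ * σ * τ⁻¹) = f σ) (g : β → α) (τ : Perm β) :
    ∑ σ ∈ stabilizerFinset (g ∘ τ), f σ = ∑ σ ∈ stabilizerFinset g, f σ := by
  refine sum_nbij' (fun σ => τ * σ * τ⁻¹) (fun σ => τ⁻¹ * σ * τ) ?_ ?_ (by simp [mul_assoc])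
    (by simp [mul_assoc]) fun σ _ => (hf σ τ).symm
  · intro σ hσ
    rw [mem_stabilizerFinset] at hσ ⊢
    funext v
    simpa using congrFun hσ (τ⁻¹ v)
  · intro σ hσ
    rw [mem_stabilizerFinset] at hσ ⊢
    funext v
    simpa using congrFun hσ (τ v)

theorem sum_stabilizerFinset_eq_of_fiberCard_eq [AddCommMonoid M] {f : Perm β → M}
    (hf : ∀ σ τ, f (τ * σ * τ⁻¹) = f σ) {g g' : β → α} (h : fiberCard g = fiberCard g') :
    ∑ σ ∈ stabilizerFinset g, f σ = ∑ σ ∈ stabilizerFinset g', f σ := by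
  obtain ⟨τ, rfl⟩ := exists_perm_comp_eq_of_fiberCard_eq h
  exact (sum_stabilizerFinset_comp_perm hf g τ).symm

theorem card_filter_comp_eq_card_stabilizerFinset (g : β → α) (τ₀ : Perm β) :
    #{τ : Perm β | g ∘ τ = g ∘ τ₀} = #(stabilizerFinset g) := by
  refine card_nbij' (· * τ₀⁻¹) (· * τ₀) ?_ ?_ (fun τ _ => inv_mul_cancel_right τ τ₀)
    (fun τ _ => mul_inv_cancel_right τ τ₀)
  · intro τ hτ
    rw [mem_coe, mem_filter_univ] at hτ
    rw [mem_coe, mem_stabilizerFinset]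
    funext v
    simpa using congrFun hτ (τ₀⁻¹ v)
  · intro τ hτ
    rw [mem_coe, mem_stabilizerFinset] at hτ
    rw [mem_coe, mem_filter_univ]
    funext v
    simpa using congrFun hτ (τ₀ v)

variable [Fintype α]

theorem card_stabilizerFinset (g : β → α) :
    #(stabilizerFinset g) = ∏ a, (fiberCard g a).factorial := by
  rw [stabilizerFinset, ← Fintype.card_subtype, DomMulAct.stabilizer_card]
  simp only [Fintype.card_subtype, fiberCard]

theorem card_filter_fiberCard_eq (g₀ : β → α) :
    #{g : β → α | fiberCard g = fiberCard g₀} = Nat.multinomial univ (fiberCard g₀) := by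
  have hfiber : ∀ g ∈ ({g | fiberCard g = fiberCard g₀} : Finset (β → α)),
      #{τ : Perm β | g₀ ∘ τ = g} = #(stabilizerFinset g₀) := by
    intro g hg
    rw [mem_filter_univ] at hg
    obtain ⟨τ₀, rfl⟩ := exists_perm_comp_eq_of_fiberCard_eq hg.symm
    exact card_filter_comp_eq_card_stabilizerFinset g₀ τ₀
  have hcount := card_eq_sum_card_fiberwise (s := univ)
    (t := ({g | fiberCard g = fiberCard g₀} : Finset (β → α))) (f := fun τ : Perm β => g₀ ∘ τ)
    fun τ _ => by simp [fiberCard_comp_perm]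
  rw [sum_congr rfl hfiber, sum_const, smul_eq_mul, card_univ, Fintype.card_perm,
    card_stabilizerFinset, ← sum_fiberCard g₀, ← Nat.multinomial_spec] at hcount
  exact Nat.eq_of_mul_eq_mul_right (prod_pos fun a _ => Nat.factorial_pos _)
    (by rw [← hcount, mul_comm])

end Colourings

section Young

variable {θ : ℕ} (lam : Fin θ → ℕ)

theorem lt_blockOf_iff (i : Fin θ) (v : ℕ) :
    (i : ℕ) < blockOf θ lam v ↔ ∑ j ∈ Iic i, lam j ≤ v := by
  rw [← filter_ge_eq_Iic]
  exact Fin.lt_card_filter_univ_iff_apply_of_imp _ fun _ _ hji h =>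
    le_trans (sum_le_sum_of_subset fun k hk =>
      (mem_filter_univ k).mpr (((mem_filter_univ k).mp hk).trans hji)) h

theorem le_blockOf_iff (i : Fin θ) (v : ℕ) :
    (i : ℕ) ≤ blockOf θ lam v ↔ ∑ j ∈ Iio i, lam j ≤ v := by
  rcases Nat.eq_zero_or_pos i with hi | hi
  · have : Iio i = ∅ := by
      ext j
      simp [Fin.lt_def, hi]
    simp [hi, this]
  · let k : Fin θ := ⟨i - 1, by omega⟩
    have hk : Iio i = Iic k := by
      ext j
      simp only [mem_Iio, mem_Iic, Fin.lt_def, Fin.le_def, k]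
      omega
    rw [hk, ← lt_blockOf_iff]
    simp only [k]
    omega

theorem blockOf_eq_iff (i : Fin θ) (v : ℕ) :
    blockOf θ lam v = i ↔ ∑ j ∈ Iio i, lam j ≤ v ∧ v < ∑ j ∈ Iio i, lam j + lam i := by
  rw [← le_blockOf_iff, ← add_comm, ← sum_insert notMem_Iio_self, Iio_insert, ← not_le,
    ← lt_blockOf_iff]
  omega

theorem blockOf_lt {n : ℕ} (hsum : ∑ i, lam i = n) (v : Fin n) : blockOf θ lam v < θ := by
  have hθ : 0 < θ := Nat.pos_of_ne_zero fun h => by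
    subst h
    simp only [univ_eq_empty, sum_empty] at hsum
    exact absurd v.2 (by omega)
  have hle : blockOf θ lam v ≤ θ := (card_le_univ _).trans_eq (Fintype.card_fin θ)
  refine lt_of_le_of_ne hle fun h => ?_
  have hlast : Iic (⟨θ - 1, by omega⟩ : Fin θ) = univ := by
    ext j
    simp only [mem_Iic, mem_univ, iff_true, Fin.le_def]
    omega
  have := (lt_blockOf_iff lam ⟨θ - 1, by omega⟩ v).mp (by simp only [h]; omega)
  rw [hlast, hsum] at this
  exact absurd v.2 (by omega)

theorem card_filter_le_val_lt {n : ℕ} {a b : ℕ} (hb : b ≤ n) :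
    #{v : Fin n | a ≤ v ∧ v < b} = b - a := by
  have h : ∀ m ∈ Ico a b, m < n := fun m hm => (mem_Ico.mp hm).2.trans_le hb
  rw [← Nat.card_Ico, ← card_attachFin _ h]
  congr 1
  ext v
  simp [mem_attachFin]

def youngColouring {n : ℕ} (hsum : ∑ i, lam i = n) : Fin n → Fin θ :=
  fun v => ⟨blockOf θ lam v, blockOf_lt lam hsum v⟩

theorem fiberCard_youngColouring {n : ℕ} (hsum : ∑ i, lam i = n) :
    fiberCard (youngColouring lam hsum) = lam := by
  funext i
  simp only [fiberCard, youngColouring, Fin.ext_iff, blockOf_eq_iff]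
  rw [card_filter_le_val_lt]
  · omega
  · rw [← hsum, add_comm, ← sum_insert notMem_Iio_self]
    exact sum_le_sum_of_subset (subset_univ _)

theorem youngFinset_eq_stabilizerFinset {n : ℕ} (hsum : ∑ i, lam i = n) :
    youngFinset n θ lam = stabilizerFinset (youngColouring lam hsum) := by
  ext σ
  rw [mem_stabilizerFinset, youngFinset, mem_filter_univ, funext_iff]
  simp only [comp_apply, youngColouring, Fin.ext_iff]

end Young

section Sorting

variable {n θ : ℕ}

noncomputable def antitoneSort (κ : Fin θ → ℕ) : Fin θ → ℕ :=
  κ ∘ Tuple.sort (OrderDual.toDual ∘ κ)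

theorem antitone_antitoneSort (κ : Fin θ → ℕ) : Antitone (antitoneSort κ) :=
  monotone_toDual_comp_iff.mp (Tuple.monotone_sort _)

theorem antitoneSort_comp_perm {lam : Fin θ → ℕ} (hlam : Antitone lam) (π : Perm (Fin θ)) :
    antitoneSort (lam ∘ π) = lam :=
  Tuple.unique_antitone (f := lam) (σ := (Tuple.sort (OrderDual.toDual ∘ lam ∘ π)).trans π)
    (τ := Equiv.refl _) (antitone_antitoneSort (lam ∘ π)) hlam

theorem le_of_mem_piAntidiag {κ : Fin θ → ℕ} (hκ : κ ∈ piAntidiag univ n) (i : Fin θ) :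
    κ i ≤ n :=
  (mem_piAntidiag.mp hκ).1 ▸ single_le_sum (fun _ _ => Nat.zero_le _) (mem_univ i)

theorem comp_perm_mem_piAntidiag {κ : Fin θ → ℕ} (hκ : κ ∈ piAntidiag univ n)
    (π : Perm (Fin θ)) : κ ∘ π ∈ piAntidiag univ n := by
  rw [mem_piAntidiag] at hκ ⊢
  exact ⟨(Equiv.sum_comp π κ).trans hκ.1, fun i _ => mem_univ i⟩

theorem antitoneSort_mem_partitionsTh {κ : Fin θ → ℕ} (hκ : κ ∈ piAntidiag univ n) :
    antitoneSort κ ∈ partitionsTh θ n := by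
  have hs := comp_perm_mem_piAntidiag hκ (Tuple.sort (OrderDual.toDual ∘ κ))
  simp only [partitionsTh, mem_filter, Fintype.mem_piFinset, mem_range]
  exact ⟨fun i => Nat.lt_succ_of_le (le_of_mem_piAntidiag hs i), antitone_antitoneSort κ,
    (mem_piAntidiag.mp hs).1⟩

theorem mem_rearrangements_iff {lam κ : Fin θ → ℕ} (hlam : lam ∈ partitionsTh θ n) :
    κ ∈ rearrangements θ n lam ↔ κ ∈ piAntidiag univ n ∧ antitoneSort κ = lam := by
  simp only [partitionsTh, mem_filter] at hlam
  have hlam' : lam ∈ piAntidiag univ n := mem_piAntidiag.mpr ⟨hlam.2.2, fun i _ => mem_univ i⟩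
  simp only [rearrangements, mem_filter, Fintype.mem_piFinset, mem_range]
  constructor
  · rintro ⟨-, π, rfl⟩
    exact ⟨comp_perm_mem_piAntidiag hlam' π, antitoneSort_comp_perm hlam.2.1 π⟩
  · rintro ⟨hκ, rfl⟩
    refine ⟨fun i => Nat.lt_succ_of_le (le_of_mem_piAntidiag hκ i),
      (Tuple.sort (OrderDual.toDual ∘ κ)).symm, ?_⟩
    funext i
    simp [antitoneSort]

theorem multinomial_comp_perm (κ : Fin θ → ℕ) (π : Perm (Fin θ)) :
    Nat.multinomial univ (κ ∘ π) = Nat.multinomial univ κ := by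
  simp only [Nat.multinomial, comp_apply, Equiv.sum_comp π κ,
    Equiv.prod_comp π fun i => (κ i).factorial]

end Sorting

section ColouringLemma

variable {α β R : Type*} [Fintype α] [DecidableEq α] [Fintype β] [DecidableEq β]
  [CommSemiring R]

theorem sum_mul_prod_partition_eq_sum_stabilizerFinset (f : Perm β → R) (p : α → R) :
    ∑ σ, f σ * (σ.partition.parts.map fun l => ∑ a, p a ^ l).prod
      = ∑ g : β → α, (∑ σ ∈ stabilizerFinset g, f σ) * ∏ v, p (g v) := by
  simp_rw [Perm.prod_map_parts_partition_eq_sum, mul_sum, sum_mul]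
  exact sum_comm' fun σ g => by simp [mem_stabilizerFinset]

variable {n θ : ℕ}

theorem fiberCard_mem_piAntidiag (g : Fin n → Fin θ) : fiberCard g ∈ piAntidiag univ n :=
  mem_piAntidiag.mpr ⟨(sum_fiberCard g).trans (Fintype.card_fin n), fun i _ => mem_univ i⟩

theorem sum_stabilizerFinset_eq_sum_youngFinset {f : Perm (Fin n) → R}
    (hf : ∀ σ τ, f (τ * σ * τ⁻¹) = f σ) (g : Fin n → Fin θ) :
    ∑ σ ∈ stabilizerFinset g, f σ = ∑ σ ∈ youngFinset n θ (antitoneSort (fiberCard g)), f σ := by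
  set s := Tuple.sort (OrderDual.toDual ∘ fiberCard g)
  have hsum : ∑ i, antitoneSort (fiberCard g) i = n :=
    (mem_piAntidiag.mp (comp_perm_mem_piAntidiag (fiberCard_mem_piAntidiag g) s)).1
  rw [youngFinset_eq_stabilizerFinset _ hsum,
    ← stabilizerFinset_injective_comp s.injective (youngColouring _ hsum)]
  refine sum_stabilizerFinset_eq_of_fiberCard_eq hf ?_
  rw [fiberCard_equiv_comp, fiberCard_youngColouring]
  funext i
  simp only [comp_apply, antitoneSort, s, apply_symm_apply]

theorem card_filter_fiberCard_eq_multinomial {κ : Fin θ → ℕ} (hκ : κ ∈ piAntidiag univ n) :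
    #{g : Fin n → Fin θ | fiberCard g = κ} = Nat.multinomial univ κ := by
  have := card_filter_fiberCard_eq (youngColouring κ (mem_piAntidiag.mp hκ).1)
  rwa [fiberCard_youngColouring] at this

theorem sum_colourings_eq_sum_piAntidiag {f : Perm (Fin n) → R}
    (hf : ∀ σ τ, f (τ * σ * τ⁻¹) = f σ) (p : Fin θ → R) :
    ∑ g : Fin n → Fin θ, (∑ σ ∈ stabilizerFinset g, f σ) * ∏ v, p (g v)
      = ∑ κ ∈ piAntidiag univ n, (Nat.multinomial univ κ : R) * (∏ i, p i ^ κ i) *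
          ∑ σ ∈ youngFinset n θ (antitoneSort κ), f σ := by
  rw [← sum_fiberwise_of_maps_to (g := fiberCard) fun g _ => fiberCard_mem_piAntidiag g]
  refine sum_congr rfl fun κ hκ => ?_
  have hterm : ∀ g ∈ ({g | fiberCard g = κ} : Finset (Fin n → Fin θ)),
      (∑ σ ∈ stabilizerFinset g, f σ) * ∏ v, p (g v)
        = (∏ i, p i ^ κ i) * ∑ σ ∈ youngFinset n θ (antitoneSort κ), f σ := by
    intro g hg
    rw [mem_filter_univ] at hg
    rw [sum_stabilizerFinset_eq_sum_youngFinset hf, prod_comp_eq_prod_pow_fiberCard, hg, mul_comm]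
  rw [sum_congr rfl hterm, sum_const, card_filter_fiberCard_eq_multinomial hκ, nsmul_eq_mul,
    mul_assoc]

theorem sum_piAntidiag_eq_sum_partitionsTh (F : (Fin θ → ℕ) → R) (Y : (Fin θ → ℕ) → R) :
    ∑ κ ∈ piAntidiag univ n, (Nat.multinomial univ κ : R) * F κ * Y (antitoneSort κ)
      = ∑ lam ∈ partitionsTh θ n,
          (Nat.multinomial univ lam : R) * (∑ κ ∈ rearrangements θ n lam, F κ) * Y lam := by
  rw [← sum_fiberwise_of_maps_to (g := antitoneSort) fun κ hκ => antitoneSort_mem_partitionsTh hκ]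
  refine sum_congr rfl fun lam hlam => ?_
  have hfilter : (piAntidiag univ n).filter (antitoneSort · = lam) = rearrangements θ n lam := by
    ext κ
    rw [mem_filter, mem_rearrangements_iff hlam]
  rw [hfilter, mul_sum, sum_mul]
  refine sum_congr rfl fun κ hκ => ?_
  obtain ⟨-, hsort⟩ := (mem_rearrangements_iff hlam).mp hκ
  have hM : Nat.multinomial univ κ = Nat.multinomial univ lam := by
    rw [← hsort, antitoneSort, multinomial_comp_perm]
  rw [hsort, hM]

end ColouringLemma

theorem cycleMultiset_eq_parts_partition (n : ℕ) (σ : Equiv.Perm (Fin n)) :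
    cycleMultiset n σ = σ.partition.parts := by
  rw [Perm.parts_partition, Fintype.card_fin]
  rfl

theorem stmt2 (n θ : ℕ)
    (f : Equiv.Perm (Fin n) → ℝ)
    (hclass : ∀ σ π : Equiv.Perm (Fin n), σ.cycleType = π.cycleType → f σ = f π)
    (p : Fin θ → ℝ) :
    ∑ σ : Equiv.Perm (Fin n),
        f σ * ((cycleMultiset n σ).map (fun l => ∑ i, p i ^ l)).prod
      = ∑ lam ∈ partitionsTh θ n,
          (Nat.multinomial Finset.univ lam : ℝ) *
            (∑ κ ∈ rearrangements θ n lam, ∏ i, p i ^ κ i) *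
            ∑ σ ∈ youngFinset n θ lam, f σ := by
  have hf : ∀ σ τ, f (τ * σ * τ⁻¹) = f σ := fun σ τ => hclass _ _ Perm.cycleType_conj
  simp_rw [cycleMultiset_eq_parts_partition]
  rw [sum_mul_prod_partition_eq_sum_stabilizerFinset, sum_colourings_eq_sum_piAntidiag hf]
  exact sum_piAntidiag_eq_sum_partitionsTh (fun κ => ∏ i, p i ^ κ i)
    fun lam => ∑ σ ∈ youngFinset n θ lam, f σ
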